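/- arXiv:2207.08209 — 3 statements merged into one kernel-verified Lean document; each statement's English description precedes it below -/
import Mathlib

section
/- Let K be a field of characteristic p > 0 and D a derivation of K with D^p = 0 (the p-fold composition is the zero map). For any f, g ∈ K^p, the derivations fD and gD commute: (fD)∘(gD) = (gD)∘(fD), and moreover (fD)^p = 0. -/
/-!
A map satisfying the Leibniz rule kills `1` and hence every `p`-th power in characteristic `p`,
since `D (x ^ p) = p * x ^ (p - 1) * D x`. For constants `f`, `g` (i.e. `D f = D g = 0`) the
Leibniz rule gives `f * D (g * D a) = f * g * D (D a)`, which is symmetric in `f` and `g`, and by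
induction `(f • D)^[n] = f ^ n • D^[n]`, which vanishes at `n = p`.
-/

def IsLeibniz {R : Type*} [CommRing R] (D : R → R) : Prop :=
  ∀ a b : R, D (a * b) = a * D b + b * D a

namespace IsLeibniz

variable {R : Type*} [CommRing R] {D : R → R}

theorem map_one (hD : IsLeibniz D) : D 1 = 0 := by
  simpa using hD 1 1

theorem map_pow_succ (hD : IsLeibniz D) (x : R) (n : ℕ) :
    D (x ^ (n + 1)) = (n + 1 : R) * x ^ n * D x := by
  induction n with
  | zero => simp
  | succ n ih =>
    rw [pow_succ', hD, ih]
    push_cast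
    ring

theorem map_pow_eq_zero (hD : IsLeibniz D) {x : R} (hx : D x = 0) (n : ℕ) : D (x ^ n) = 0 := by
  cases n with
  | zero => simpa using hD.map_one
  | succ n => rw [hD.map_pow_succ, hx, mul_zero]

theorem map_pow_char (hD : IsLeibniz D) (p : ℕ) [CharP R p] (x : R) : D (x ^ p) = 0 := by
  cases p with
  | zero => simpa using hD.map_one
  | succ k =>
    rw [hD.map_pow_succ, ← Nat.cast_succ, CharP.cast_eq_zero, zero_mul, zero_mul]

theorem mul_map_mul_map (hD : IsLeibniz D) (f : R) {g : R} (hg : D g = 0) (a : R) :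
    f * D (g * D a) = f * g * D (D a) := by
  rw [hD, hg]
  ring

theorem iterate_mul_map (hD : IsLeibniz D) {f : R} (hf : D f = 0) (n : ℕ) (a : R) :
    (fun a : R => f * D a)^[n] a = f ^ n * D^[n] a := by
  induction n with
  | zero => simp
  | succ n ih =>
    rw [Function.iterate_succ_apply', Function.iterate_succ_apply', ih, hD,
      hD.map_pow_eq_zero hf]
    ring

end IsLeibniz

theorem stmt2_general (K : Type*) [Field K] (p : ℕ) [Fact p.Prime] [CharP K p]
    (D : K → K)
    (hmul : ∀ a b : K, D (a * b) = a * D b + b * D a)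
    (hDp : ∀ a : K, D^[p] a = 0)
    (f g : K) (hf : f ∈ (frobenius K p).fieldRange)
    (hg : g ∈ (frobenius K p).fieldRange) :
    ((fun a : K => f * D a) ∘ (fun a : K => g * D a) =
      (fun a : K => g * D a) ∘ (fun a : K => f * D a)) ∧
    (∀ a : K, (fun a : K => f * D a)^[p] a = 0) := by
  have hD : IsLeibniz D := hmul
  obtain ⟨f', rfl⟩ := hf
  obtain ⟨g', rfl⟩ := hg
  have hDf : D (f' ^ p) = 0 := hD.map_pow_char p f'
  have hDg : D (g' ^ p) = 0 := hD.map_pow_char p g'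
  constructor
  · funext a
    simp only [Function.comp_apply, frobenius_def]
    rw [hD.mul_map_mul_map _ hDg, hD.mul_map_mul_map _ hDf, mul_comm (f' ^ p)]
  · intro a
    rw [frobenius_def, hD.iterate_mul_map hDf, hDp, mul_zero]

/-- Let `K` be a field of characteristic `p > 0` and `D` a
derivation of `K` with `D^p = 0`. For any `f, g ∈ K^p`, the derivations `fD`
and `gD` commute, and `(fD)^p = 0`. -/
theorem stmt2 (K : Type*) [Field K] (p : ℕ) [Fact p.Prime] [CharP K p]
    (D : K → K) (hadd : ∀ a b : K, D (a + b) = D a + D b)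
    (hmul : ∀ a b : K, D (a * b) = a * D b + b * D a)
    (hDp : ∀ a : K, D^[p] a = 0)
    (f g : K) (hf : f ∈ (frobenius K p).fieldRange)
    (hg : g ∈ (frobenius K p).fieldRange) :
    ((fun a : K => f * D a) ∘ (fun a : K => g * D a) =
      (fun a : K => g * D a) ∘ (fun a : K => f * D a)) ∧
    (∀ a : K, (fun a : K => f * D a)^[p] a = 0) :=
  stmt2_general K p D hmul hDp f g hf hg
end

section
/- Let A be a discrete valuation ring with maximal ideal m and residue field κ, and let B be a local A-algebra which is a discrete valuation ring, finite and free of rank d as an A-module, with the same residue field κ (i.e., the induced map on residue fields is an isomorphism). Suppose z ∈ B generates the maximal ideal of B and z^d ∈ A. Then z^d generates m, and the A-algebra map A[T]/(T^d − z^d) → B sending T to z is an isomorphism. -/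
/-!
Since `B` and `A` have the same residue field, every `b : B` has a `z`-adic expansion
`b = a₀ + a₁ z + ⋯ + a_{n-1} z^{n-1} + z^n c` with `aᵢ : A`. Once `z^n ∈ 𝔪_A B`, Nakayama's
lemma turns this into `B = A[z]_{<n}`; in particular `1, z, …, z^{d-1}` span `B` (as
`z^d = w ∈ 𝔪_A`), and `d ≤ v_B(x)` for every nonzero `x ∈ 𝔪_A`. The latter forbids a
factorisation of `w` into two nonunits, since their valuations would add up to more than
`v_B(w) = d`. Finally `A[T]/(T^d - w) → B` is a surjection between free `A`-modules of rank `d`,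
hence an isomorphism.
-/

open Polynomial IsLocalRing

section Expansion

variable {A B : Type*} [CommRing A] [CommRing B] [Algebra A B] {z : B}

theorem exists_eq_aeval_add_pow_mul
    (hres : ∀ b : B, ∃ a : A, b - algebraMap A B a ∈ Ideal.span {z}) (n : ℕ) (b : B) :
    ∃ p ∈ A[X]_n, ∃ c : B, b = aeval z p + z ^ n * c := by
  induction n with
  | zero => exact ⟨0, zero_mem _, b, by simp⟩
  | succ n ih =>
    obtain ⟨p, hp, c, rfl⟩ := ih
    obtain ⟨a, c', hc'⟩ := hres c |>.imp fun _ h => Ideal.mem_span_singleton'.mp h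
    refine ⟨p + C a * X ^ n, ?_, c', ?_⟩
    · refine add_mem (degreeLT_mono n.le_succ hp) (mem_degreeLT.mpr ?_)
      exact (degree_C_mul_X_pow_le n a).trans_lt (by exact_mod_cast n.lt_succ_self)
    · simp only [map_add, map_mul, aeval_C, map_pow, aeval_X]
      linear_combination -z ^ n * hc'

variable [IsLocalRing A] [Module.Finite A B]

theorem map_aeval_degreeLT_eq_top
    (hres : ∀ b : B, ∃ a : A, b - algebraMap A B a ∈ Ideal.span {z}) {n : ℕ}
    (hn : z ^ n ∈ (maximalIdeal A).map (algebraMap A B)) :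
    (A[X]_n).map (aeval z).toLinearMap = ⊤ := by
  refine top_le_iff.mp <| Submodule.le_of_le_smul_of_le_jacobson_bot Module.Finite.fg_top
    (maximalIdeal_le_jacobson ⊥) fun b _ => ?_
  obtain ⟨p, hp, c, rfl⟩ := exists_eq_aeval_add_pow_mul hres n b
  refine Submodule.add_mem_sup ⟨p, hp, rfl⟩ ?_
  rw [Ideal.smul_top_eq_map]
  exact Ideal.mul_mem_right c _ hn

theorem finrank_le_of_pow_mem_map_maximalIdeal
    (hres : ∀ b : B, ∃ a : A, b - algebraMap A B a ∈ Ideal.span {z}) {n : ℕ}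
    (hn : z ^ n ∈ (maximalIdeal A).map (algebraMap A B)) :
    Module.finrank A B ≤ n := by
  have := Submodule.finrank_map_le (aeval z).toLinearMap (A[X]_n)
  rwa [map_aeval_degreeLT_eq_top hres hn, finrank_top, (degreeLTEquiv A n).finrank_eq,
    Module.finrank_fin_fun] at this

theorem surjective_aeval_of_pow_mem_map_maximalIdeal
    (hres : ∀ b : B, ∃ a : A, b - algebraMap A B a ∈ Ideal.span {z}) {n : ℕ}
    (hn : z ^ n ∈ (maximalIdeal A).map (algebraMap A B)) :
    Function.Surjective (aeval z : A[X] →ₐ[A] B) := fun b => by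
  obtain ⟨p, -, hp⟩ := (map_aeval_degreeLT_eq_top hres hn).ge (Submodule.mem_top (x := b))
  exact ⟨p, hp⟩

variable [IsDomain B] [IsDiscreteValuationRing B]

theorem pow_finrank_dvd_algebraMap_of_mem_maximalIdeal
    (hres : ∀ b : B, ∃ a : A, b - algebraMap A B a ∈ Ideal.span {z}) (hz : Irreducible z)
    {x : A} (hx : x ∈ maximalIdeal A) :
    z ^ Module.finrank A B ∣ algebraMap A B x := by
  rcases eq_or_ne (algebraMap A B x) 0 with hx0 | hx0
  · exact hx0 ▸ dvd_zero _
  obtain ⟨e, hxe⟩ := IsDiscreteValuationRing.associated_pow_irreducible hx0 hz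
  have he : z ^ e ∈ (maximalIdeal A).map (algebraMap A B) :=
    Ideal.mem_of_dvd _ hxe.dvd (Ideal.mem_map_of_mem _ hx)
  exact (pow_dvd_pow z (finrank_le_of_pow_mem_map_maximalIdeal hres he)).trans hxe.symm.dvd

end Expansion

theorem ker_aeval_eq_span_singleton_of_surjective {A B : Type*} [CommRing A] [Nontrivial A]
    [CommRing B] [Algebra A B] [Module.Finite A B] [Module.Free A B] {z : B} {f : A[X]}
    (hf : f.Monic) (hfz : aeval z f = 0) (hdeg : f.natDegree ≤ Module.finrank A B)
    (hsurj : Function.Surjective (aeval z : A[X] →ₐ[A] B)) :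
    RingHom.ker (aeval z : A[X] →ₐ[A] B) = Ideal.span {f} := by
  let φ := AdjoinRoot.liftAlgHom f (Algebra.ofId A B) z hfz
  have hφ (p : A[X]) : φ (AdjoinRoot.mk f p) = aeval z p :=
    AdjoinRoot.liftAlgHom_mk f (Algebra.ofId A B) z hfz p
  let pb := AdjoinRoot.powerBasis' hf
  have : Module.Finite A (AdjoinRoot f) := pb.finite
  have : Module.Free A (AdjoinRoot f) := .of_basis pb.basis
  have hφinj : Function.Injective φ := by
    refine (OrzechProperty.bijective_of_surjective_of_finrank_le φ.toLinearMap ?_ ?_).1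
    · intro b
      obtain ⟨p, rfl⟩ := hsurj b
      exact ⟨AdjoinRoot.mk f p, hφ p⟩
    · rwa [pb.finrank, AdjoinRoot.powerBasis'_dim]
  ext p
  rw [RingHom.mem_ker, Ideal.mem_span_singleton, ← AdjoinRoot.mk_eq_zero, ← hφ,
    map_eq_zero_iff φ hφinj]

theorem maximalIdeal_eq_span_of_algebraMap_eq_pow_finrank {A B : Type*} [CommRing A]
    [IsDomain A] [IsDiscreteValuationRing A] [CommRing B] [IsDomain B] [IsDiscreteValuationRing B]
    [Algebra A B] [Module.Finite A B] [Module.Free A B] {z : B}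
    (hres : ∀ b : B, ∃ a : A, b - algebraMap A B a ∈ Ideal.span {z}) (hz : Irreducible z)
    {w : A} (hw : algebraMap A B w = z ^ Module.finrank A B) :
    maximalIdeal A = Ideal.span {w} := by
  have hd : Module.finrank A B ≠ 0 := Module.finrank_pos.ne'
  rw [← IsDiscreteValuationRing.irreducible_iff_uniformizer]
  refine ⟨fun hw' => hz.not_isUnit ((isUnit_pow_iff hd).mp (hw ▸ hw'.map _)), fun x y hxy => ?_⟩
  by_contra! hxy'
  have hx := pow_finrank_dvd_algebraMap_of_mem_maximalIdeal hres hz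
    ((mem_maximalIdeal x).mpr hxy'.1)
  have hy : z ∣ algebraMap A B y := by
    rw [← Ideal.mem_span_singleton,
      ← (IsDiscreteValuationRing.irreducible_iff_uniformizer z).mp hz]
    exact map_nonunit _ _ hxy'.2
  have := mul_dvd_mul hx hy
  rw [← map_mul, ← hxy, hw, ← pow_succ, pow_dvd_pow_iff hz.ne_zero hz.not_isUnit] at this
  omega

/-- Let `A ⊆ B` be discrete valuation rings, with `B` a local
`A`-algebra, finite free of rank `d` as an `A`-module, inducing an isomorphism
on residue fields. If `z` is a uniformizer of `B` with `z^d = w ∈ A`, then `w`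
is a uniformizer of `A` and the `A`-algebra map `A[T]/(T^d - w) → B`, `T ↦ z`,
is an isomorphism (i.e. `T ↦ z` is surjective with kernel `(T^d - w)`). -/
theorem stmt6 (A B : Type*) [CommRing A] [IsDomain A] [IsDiscreteValuationRing A]
    [CommRing B] [IsDomain B] [IsDiscreteValuationRing B] [Algebra A B]
    [Module.Finite A B] [Module.Free A B]
    (d : ℕ) (hd : Module.finrank A B = d)
    (hres : ∀ b : B, ∃ a : A, b - algebraMap A B a ∈ IsLocalRing.maximalIdeal B)
    (z : B) (hz : IsLocalRing.maximalIdeal B = Ideal.span {z})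
    (w : A) (hw : algebraMap A B w = z ^ d) :
    IsLocalRing.maximalIdeal A = Ideal.span {w} ∧
    Function.Surjective (Polynomial.aeval z : Polynomial A →ₐ[A] B) ∧
    RingHom.ker (Polynomial.aeval z : Polynomial A →ₐ[A] B) =
      Ideal.span {Polynomial.X ^ d - Polynomial.C w} := by
  subst hd
  rw [hz] at hres
  have hzirr : Irreducible z := (IsDiscreteValuationRing.irreducible_iff_uniformizer z).mpr hz
  have hwspan := maximalIdeal_eq_span_of_algebraMap_eq_pow_finrank hres hzirr hw
  have hsurj : Function.Surjective (aeval z : A[X] →ₐ[A] B) :=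
    surjective_aeval_of_pow_mem_map_maximalIdeal hres
      (hw ▸ Ideal.mem_map_of_mem _ (hwspan ▸ Ideal.mem_span_singleton_self w))
  refine ⟨hwspan, hsurj, ker_aeval_eq_span_singleton_of_surjective ?_ ?_ ?_ hsurj⟩
  · exact monic_X_pow_sub_C w Module.finrank_pos.ne'
  · simp [hw]
  · simp
end

section
/- Let k ⊆ L ⊆ K be fields of characteristic p > 0, where K is a function field in one variable over k (so [K : kK^p] = p), the extension K/L is finite and purely inseparable of degree p^m, and k ⊆ L. Then L = kK^{p^m}. -/
/-!
The minimal polynomial over `L` of any `a ∈ K` is `X ^ p ^ e - c`, and its degree divides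
`[K : L] = p ^ m`, so `a ^ p ^ m ∈ L`. Hence `k K^{p^m} ≤ L`, and two nested subfields of the
same finite index in `K` coincide.
-/

open Module

theorem IsPurelyInseparable.pow_finrank_mem_range {F E : Type*} [Field F] [Field E]
    [Algebra F E] [IsPurelyInseparable F E] [FiniteDimensional F E] (a : E) :
    a ^ finrank F E ∈ (algebraMap F E).range := by
  obtain ⟨c, hc⟩ := minpoly.degree_dvd (IsIntegral.of_finite F a)
  rw [hc, pow_mul, minpoly_natDegree_eq]
  exact Subring.pow_mem _ (elemExponent_def F a) c

theorem Subfield.eq_of_le_of_finrank_eq {E : Type*} [Field E] {A B : Subfield E} (h : A ≤ B)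
    (h_finrank : finrank A E = finrank B E) (h_pos : 0 < finrank B E) : A = B := by
  refine le_antisymm h (relfinrank_eq_one_iff.1 ?_)
  have := relfinrank_mul_finrank_top h
  rw [h_finrank] at this
  exact (mul_eq_right₀ h_pos.ne').1 this

/-- Let `k ⊆ L ⊆ K` be fields of characteristic `p > 0`, where
`K` is a function field in one variable over `k` (meaning
`[K : k K^{p^j}] = p^j` for all `j`), and `K/L` is finite purely inseparable of
degree `p^m`. Then `L = k K^{p^m}`. -/
theorem stmt10 (K : Type*) [Field K] (p : ℕ) [Fact p.Prime] [CharP K p]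
    (k L : Subfield K) (hkL : k ≤ L)
    (hfunction : ∀ j : ℕ,
      Module.finrank
        (↥(Subfield.closure ((k : Set K) ∪ Set.range fun a : K => a ^ p ^ j))) K = p ^ j)
    (m : ℕ)
    (hdeg : Module.finrank (↥L) K = p ^ m)
    (hpi : ∀ a : K, ∃ j : ℕ, a ^ p ^ j ∈ L) :
    L = Subfield.closure ((k : Set K) ∪ Set.range fun a : K => a ^ p ^ m) := by
  have hdeg_pos : 0 < finrank L K := hdeg ▸ pow_pos (Fact.out : p.Prime).pos m
  have : ExpChar L p := ExpChar.prime Fact.out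
  have : FiniteDimensional L K := Module.finite_of_finrank_pos hdeg_pos
  have : IsPurelyInseparable L K := (isPurelyInseparable_iff_pow_mem L p).2 fun a ↦
    (hpi a).imp fun _ h ↦ ⟨⟨_, h⟩, rfl⟩
  have hpow_mem : ∀ a : K, a ^ p ^ m ∈ L := fun a ↦ by
    obtain ⟨b, hb⟩ := hdeg ▸ IsPurelyInseparable.pow_finrank_mem_range (F := L) a
    exact hb ▸ b.2
  refine (Subfield.eq_of_le_of_finrank_eq ?_ (by rw [hfunction, hdeg]) hdeg_pos).symm
  exact Subfield.closure_le.2 (Set.union_subset hkL (Set.range_subset_iff.2 hpow_mem))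
end
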